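/- arXiv:2001.10266 — 5 statements merged into one kernel-verified Lean document; each statement's English description precedes it below -/
import Mathlib

section
/- Given a filter 𝓕 on ℕ, the collection 𝓔_𝓕 = {E ⊆ ℕ×ℕ : E has uniformly bounded sections (i.e., E is contained in a band {(i,j) : |i−j| ≤ k} for some k) and S(E) ∈ 𝓕} is closed under taking subsets, finite unions, inverses, and composition of relations, and contains the diagonal; i.e., it is a coarse structure on ℕ. -/
/-- The set of splitting points of `E ⊆ ℕ × ℕ`. -/
def splitPoints (E : Set (ℕ × ℕ)) : Set ℕ :=
  {n | ∀ i j : ℕ, i < n → n ≤ j → (i, j) ∉ E ∧ (j, i) ∉ E}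

/-- `E` has uniformly bounded sections: it is contained in a band `{(i,j) : |i - j| ≤ k}`. -/
def Banded (E : Set (ℕ × ℕ)) : Prop :=
  ∃ k : ℕ, ∀ p ∈ E, p.1 ≤ p.2 + k ∧ p.2 ≤ p.1 + k

/-- The collection `𝓔_𝓕` of banded entourages whose set of splitting points lies in `𝓕`. -/
def filterCoarse (𝓕 : Filter ℕ) : Set (Set (ℕ × ℕ)) :=
  {E | Banded E ∧ splitPoints E ∈ 𝓕}

/-- For any filter `𝓕` on `ℕ`, the collection `𝓔_𝓕` contains the diagonal and is closed
under subsets, finite unions, inverses, and composition of relations: it is a coarse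
structure on `ℕ`. -/
theorem filterCoarse_isCoarseStructure (𝓕 : Filter ℕ) :
    {p : ℕ × ℕ | p.1 = p.2} ∈ filterCoarse 𝓕 ∧
    (∀ E ∈ filterCoarse 𝓕, ∀ F ⊆ E, F ∈ filterCoarse 𝓕) ∧
    (∀ E ∈ filterCoarse 𝓕, ∀ F ∈ filterCoarse 𝓕, E ∪ F ∈ filterCoarse 𝓕) ∧
    (∀ E ∈ filterCoarse 𝓕, {p : ℕ × ℕ | (p.2, p.1) ∈ E} ∈ filterCoarse 𝓕) ∧
    (∀ E ∈ filterCoarse 𝓕, ∀ F ∈ filterCoarse 𝓕,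
      {p : ℕ × ℕ | ∃ k : ℕ, (p.1, k) ∈ E ∧ (k, p.2) ∈ F} ∈ filterCoarse 𝓕) := by
  refine ⟨⟨⟨0, ?_⟩, ?_⟩, ?_, ?_, ?_, ?_⟩
  · rintro ⟨a, b⟩ h
    simp only [Set.mem_setOf_eq] at h
    omega
  · have : splitPoints {p : ℕ × ℕ | p.1 = p.2} = Set.univ := by
      ext n
      simp only [splitPoints, Set.mem_setOf_eq, Set.mem_univ, iff_true]
      intro i j hi hj
      exact ⟨fun h => by have : i = j := h; omega, fun h => by have : j = i := h; omega⟩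
    rw [this]; exact Filter.univ_mem
  · rintro E ⟨⟨k, hk⟩, hs⟩ F hFE
    refine ⟨⟨k, fun p hp => hk p (hFE hp)⟩, Filter.mem_of_superset hs ?_⟩
    intro n hn i j hi hj
    exact ⟨fun h => (hn i j hi hj).1 (hFE h), fun h => (hn i j hi hj).2 (hFE h)⟩
  · rintro E ⟨⟨k, hk⟩, hsE⟩ F ⟨⟨l, hl⟩, hsF⟩
    refine ⟨⟨max k l, ?_⟩, Filter.mem_of_superset (Filter.inter_mem hsE hsF) ?_⟩
    · rintro p (hp | hp)
      · have := hk p hp; omega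
      · have := hl p hp; omega
    · rintro n ⟨hnE, hnF⟩ i j hi hj
      constructor
      · rintro (h | h)
        · exact (hnE i j hi hj).1 h
        · exact (hnF i j hi hj).1 h
      · rintro (h | h)
        · exact (hnE i j hi hj).2 h
        · exact (hnF i j hi hj).2 h
  · rintro E ⟨⟨k, hk⟩, hs⟩
    refine ⟨⟨k, fun p hp => by have := hk _ hp; simp at this ⊢; omega⟩,
      Filter.mem_of_superset hs ?_⟩
    intro n hn i j hi hj
    exact ⟨(hn i j hi hj).2, (hn i j hi hj).1⟩
  · rintro E ⟨⟨k, hk⟩, hsE⟩ F ⟨⟨l, hl⟩, hsF⟩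
    refine ⟨⟨k + l, ?_⟩, Filter.mem_of_superset (Filter.inter_mem hsE hsF) ?_⟩
    · rintro ⟨a, b⟩ ⟨m, h1, h2⟩
      have := hk _ h1; have := hl _ h2
      simp only at this ⊢
      omega
    · rintro n ⟨hnE, hnF⟩ i j hi hj
      constructor
      · rintro ⟨m, h1, h2⟩
        rcases lt_or_ge m n with hm | hm
        · exact (hnF m j hm hj).1 h2
        · exact (hnE i m hi hm).1 h1
      · rintro ⟨m, h1, h2⟩
        rcases lt_or_ge m n with hm | hm
        · exact (hnE m j hm hj).2 h1
        · exact (hnF i m hi hm).2 h2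
end

section
/- If the coarse structure 𝓔_𝓕 associated to a filter 𝓕 on ℕ has a countable cofinal subset (i.e., a countable family {Eₙ} such that every element of 𝓔_𝓕 is contained in some Eₙ), then 𝓕 is countably generated (there is a countable family {Aₙ} ⊆ 𝓕 such that every B ∈ 𝓕 contains some Aₙ). -/
/-!
For `B ∈ 𝓕`, the entourage of edges `(i - 1, i)` with `i ∉ B` lies in `𝓔_𝓕` and its splitting
points are exactly `B`, up to the point `0`, which splits every entourage. Splitting points are
antitone in the entourage, so if `{Eₙ}` is cofinal then some `S(Eₙ)` is contained in `B ∪ {0}`.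
The point `0` is then removed by hand: either `{0}ᶜ ∈ 𝓕` and we intersect with it, or `0` belongs
to every member of `𝓕`.
-/

theorem Filter.exists_seq_basis_of_subset_insert {α : Type*} {f : Filter α} (a : α)
    {A : ℕ → Set α} (hA : ∀ n, A n ∈ f) (hcof : ∀ B ∈ f, ∃ n, A n ⊆ insert a B) :
    ∃ As : ℕ → Set α, (∀ n, As n ∈ f) ∧ ∀ B ∈ f, ∃ n, As n ⊆ B := by
  by_cases ha : {a}ᶜ ∈ f
  · refine ⟨fun n => A n \ {a}, fun n => sdiff_mem (hA n) ha, fun B hB => ?_⟩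
    obtain ⟨n, hn⟩ := hcof B hB
    exact ⟨n, Set.sdiff_singleton_subset_iff.mpr hn⟩
  · refine ⟨A, hA, fun B hB => ?_⟩
    have haB : a ∈ B := by
      by_contra haB
      exact ha (mem_of_superset hB (Set.subset_compl_singleton_iff.mpr haB))
    simpa only [Set.insert_eq_of_mem haB] using hcof B hB

theorem splitPoints_antitone : Antitone splitPoints :=
  fun _ _ hE _ hn i j hi hj => ⟨fun h => (hn i j hi hj).1 (hE h), fun h => (hn i j hi hj).2 (hE h)⟩

theorem zero_mem_splitPoints (E : Set (ℕ × ℕ)) : 0 ∈ splitPoints E :=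
  fun _ _ hi => absurd hi (Nat.not_lt_zero _)

def succEdgesTo (s : Set ℕ) : Set (ℕ × ℕ) :=
  {p | p.1 + 1 = p.2 ∧ p.2 ∈ s}

theorem banded_succEdgesTo (s : Set ℕ) : Banded (succEdgesTo s) :=
  ⟨1, fun _ hp => by have := hp.1; omega⟩

theorem splitPoints_succEdgesTo (s : Set ℕ) : splitPoints (succEdgesTo s) = insert 0 sᶜ := by
  ext (_ | m)
  · simpa using zero_mem_splitPoints _
  · simp only [Set.mem_insert_iff, Nat.succ_ne_zero, false_or, Set.mem_compl_iff]
    constructor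
    · intro hm hs
      exact (hm m (m + 1) m.lt_succ_self le_rfl).1 ⟨rfl, hs⟩
    · rintro hs i j hi hj
      refine ⟨fun ⟨hij, hjs⟩ => ?_, fun hji => by have := hji.1; omega⟩
      obtain rfl : j = m + 1 := by simp only at hij; omega
      exact hs hjs

theorem succEdgesTo_compl_mem_filterCoarse {𝓕 : Filter ℕ} {B : Set ℕ} (hB : B ∈ 𝓕) :
    succEdgesTo Bᶜ ∈ filterCoarse 𝓕 := by
  refine ⟨banded_succEdgesTo _, ?_⟩
  rw [splitPoints_succEdgesTo, compl_compl]
  exact Filter.mem_of_superset hB (Set.subset_insert 0 B)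

/-- If `𝓔_𝓕` has a countable cofinal subset, then `𝓕` is countably generated:
there is a countable family `{Aₙ} ⊆ 𝓕` such that every `B ∈ 𝓕` contains some `Aₙ`. -/
theorem filter_countably_generated_of_countable_cofinal (𝓕 : Filter ℕ)
    (h : ∃ Es : ℕ → Set (ℕ × ℕ), (∀ n, Es n ∈ filterCoarse 𝓕) ∧
      ∀ E ∈ filterCoarse 𝓕, ∃ n, E ⊆ Es n) :
    ∃ As : ℕ → Set ℕ, (∀ n, As n ∈ 𝓕) ∧ ∀ B ∈ 𝓕, ∃ n, As n ⊆ B := by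
  obtain ⟨Es, hEs, hcof⟩ := h
  refine Filter.exists_seq_basis_of_subset_insert 0 (fun n => (hEs n).2) fun B hB => ?_
  obtain ⟨n, hn⟩ := hcof _ (succEdgesTo_compl_mem_filterCoarse hB)
  refine ⟨n, ?_⟩
  simpa only [splitPoints_succEdgesTo, compl_compl] using splitPoints_antitone hn
end

section
/- Let X and Y be sets, H = ℓ²(X), K = ℓ²(Y), and let U : ℓ²(X) → ℓ²(Y) be an isometry. Define Φ(a) = U a U* for a ∈ B(ℓ²(X)). For x ∈ X, y ∈ Y, and δ > 0, set Y_{x,δ} = {y : ‖Φ(e_{xx}) e_{yy} Φ(1)‖ > δ} and X_{y,δ} = {x : ‖U* e_{yy} U e_{xx}‖ > δ}, where e_{zz} denotes the rank-one projection onto the basis vector δ_z. Then y ∈ Y_{x,δ} iff x ∈ X_{y,δ}, and moreover |Y_{x,δ}| ≤ δ⁻² for all x and |X_{y,δ}| ≤ δ⁻² for all y. -/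
/-!
Both localization quantities equal `|⟪U* δ_y, δ_x⟫| ‖U* δ_y‖`, since every operator involved is
a composite of rank-one operators. This number is at most `|(U δ_x) y|` and at most
`|(U* δ_y) x|`, and the vectors `U δ_x`, `U* δ_y` have norm at most `1`. A vector of norm at
most `1` in `ℓ²` has at most `δ⁻²` coordinates of modulus greater than `δ` (Markov's
inequality for the squares of its coordinates), which bounds both sets. -/

open ContinuousLinearMap

noncomputable section

/-- The standard basis vector `δ_x` of `ℓ²(X)`. -/
def deltaVec (X : Type*) [DecidableEq X] (x : X) : lp (fun _ : X => ℂ) 2 := lp.single 2 x 1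

/-- The rank-one orthogonal projection `e_{xx}` onto `ℂ δ_x` in `ℓ²(X)`. -/
def ee (X : Type*) [DecidableEq X] (x : X) : lp (fun _ : X => ℂ) 2 →L[ℂ] lp (fun _ : X => ℂ) 2 :=
  (innerSL ℂ (deltaVec X x)).smulRight (deltaVec X x)

open InnerProductSpace

theorem Summable.finite_setOf_le {ι : Type*} {a : ι → ℝ} (ha : Summable a) {ε : ℝ}
    (hε : 0 < ε) : {i | ε ≤ a i}.Finite := by
  simpa only [not_lt] using
    Filter.eventually_cofinite.mp (ha.tendsto_cofinite_zero.eventually_lt_const hε)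

theorem Summable.natCard_setOf_le_mul_le_tsum {ι : Type*} {a : ι → ℝ} (ha : Summable a)
    (ha₀ : ∀ i, 0 ≤ a i) {ε : ℝ} (hε : 0 < ε) :
    (Nat.card {i | ε ≤ a i} : ℝ) * ε ≤ ∑' i, a i := by
  have hfin := ha.finite_setOf_le hε
  calc (Nat.card {i | ε ≤ a i} : ℝ) * ε = ∑ _i ∈ hfin.toFinset, ε := by
        rw [Finset.sum_const, nsmul_eq_mul, Nat.card_eq_card_finite_toFinset hfin]
    _ ≤ ∑ i ∈ hfin.toFinset, a i := Finset.sum_le_sum fun i hi => hfin.mem_toFinset.mp hi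
    _ ≤ ∑' i, a i := ha.sum_le_tsum _ fun i _ => ha₀ i

namespace lp

variable {ι : Type*} {E : ι → Type*} [∀ i, NormedAddCommGroup (E i)]

theorem hasSum_norm_sq (v : lp E 2) : HasSum (fun i => ‖v i‖ ^ 2) (‖v‖ ^ 2) := by
  simpa only [ENNReal.toReal_ofNat, Real.rpow_two] using lp.hasSum_norm (p := 2) (by norm_num) v

theorem finite_and_natCard_le_of_le_norm_apply (v : lp E 2) (hv : ‖v‖ ≤ 1) {δ : ℝ} (hδ : 0 < δ)
    {f : ι → ℝ} (hf : ∀ i, f i ≤ ‖v i‖) :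
    {i | δ < f i}.Finite ∧ (Nat.card {i | δ < f i} : ℝ) ≤ δ⁻¹ ^ 2 := by
  have hsub : {i | δ < f i} ⊆ {i | δ ^ 2 ≤ ‖v i‖ ^ 2} := fun i hi =>
    pow_le_pow_left₀ hδ.le (hi.out.trans_le (hf i)).le 2
  have hsum := (hasSum_norm_sq v).summable
  have hfin := hsum.finite_setOf_le (pow_pos hδ 2)
  refine ⟨hfin.subset hsub, ?_⟩
  have hmarkov : (Nat.card {i | δ ^ 2 ≤ ‖v i‖ ^ 2} : ℝ) * δ ^ 2 ≤ 1 := by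
    calc _ ≤ ∑' i, ‖v i‖ ^ 2 :=
          hsum.natCard_setOf_le_mul_le_tsum (fun i => by positivity) (pow_pos hδ 2)
      _ = ‖v‖ ^ 2 := (hasSum_norm_sq v).tsum_eq
      _ ≤ 1 := pow_le_one₀ (norm_nonneg v) hv
  calc (Nat.card {i | δ < f i} : ℝ) ≤ Nat.card {i | δ ^ 2 ≤ ‖v i‖ ^ 2} := by
        exact_mod_cast Nat.card_mono hfin hsub
    _ ≤ δ⁻¹ ^ 2 := by
        rw [inv_pow, ← one_div]
        exact (le_div_iff₀ (pow_pos hδ 2)).mpr hmarkov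

end lp

section RankOne

variable {𝕜 E F : Type*} [RCLike 𝕜] [NormedAddCommGroup E] [InnerProductSpace 𝕜 E] [CompleteSpace E]
  [NormedAddCommGroup F] [InnerProductSpace 𝕜 F] [CompleteSpace F]

theorem norm_adjoint_apply_le_of_isometry {U : E →L[𝕜] F} (hU : ∀ f, ‖U f‖ = ‖f‖) (w : F) :
    ‖adjoint U w‖ ≤ ‖w‖ := by
  have hU₁ : ‖U‖ ≤ 1 := opNorm_le_bound _ zero_le_one fun f => by rw [hU f, one_mul]
  calc ‖adjoint U w‖ ≤ ‖adjoint U‖ * ‖w‖ := le_opNorm _ _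
    _ = ‖U‖ * ‖w‖ := by rw [LinearIsometryEquiv.norm_map]
    _ ≤ ‖w‖ := mul_le_of_le_one_left (norm_nonneg w) hU₁

theorem norm_adjoint_conj_rankOne_comp_rankOne (U : E →L[𝕜] F) (u : E) (w : F) :
    ‖(adjoint U ∘L rankOne 𝕜 w w ∘L U) ∘L rankOne 𝕜 u u‖ =
      ‖inner 𝕜 (adjoint U w) u‖ * ‖adjoint U w‖ * ‖u‖ := by
  rw [rankOne_comp w w U, comp_rankOne w (adjoint U w) (adjoint U), rankOne_comp_rankOne,
    norm_smul, norm_rankOne, mul_assoc]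

theorem norm_conj_rankOne_comp_rankOne_comp_conj_id {U : E →L[𝕜] F} (hU : ∀ f, ‖U f‖ = ‖f‖)
    (u : E) (w : F) :
    ‖(U ∘L rankOne 𝕜 u u ∘L adjoint U) ∘L rankOne 𝕜 w w ∘L
        (U ∘L ContinuousLinearMap.id 𝕜 E ∘L adjoint U)‖ =
      ‖inner 𝕜 (adjoint U w) u‖ * ‖adjoint U w‖ * ‖u‖ := by
  rw [id_comp, rankOne_comp u u (adjoint U), adjoint_adjoint, comp_rankOne u (U u) U,
    rankOne_comp w w, adjoint_comp, adjoint_adjoint, rankOne_comp_rankOne, norm_smul,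
    norm_rankOne, comp_apply, hU, hU, ← adjoint_inner_right, norm_inner_symm]
  ring

end RankOne

theorem ee_eq_rankOne (X : Type*) [DecidableEq X] (x : X) :
    ee X x = rankOne ℂ (deltaVec X x) (deltaVec X x) :=
  rfl

theorem norm_deltaVec (X : Type*) [DecidableEq X] (x : X) : ‖deltaVec X x‖ = 1 := by
  rw [deltaVec, lp.norm_single (by norm_num), norm_one]

theorem inner_deltaVec_left {X : Type*} [DecidableEq X] (x : X) (f : lp (fun _ : X => ℂ) 2) :
    inner ℂ (deltaVec X x) f = f x := by
  rw [deltaVec, lp.inner_single_left]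
  simp

/-- Let `U : ℓ²(X) → ℓ²(Y)` be an isometry, `Φ(a) = U a U*`, `Ψ(b) = U* b U`.  With
`Y_{x,δ} = {y : ‖Φ(e_xx) e_yy Φ(1)‖ > δ}` and `X_{y,δ} = {x : ‖Ψ(e_yy) e_xx‖ > δ}`,
we have `y ∈ Y_{x,δ} ↔ x ∈ X_{y,δ}`, and both sets are finite of cardinality `≤ δ⁻²`. -/
theorem roe_localization_sets {X Y : Type*} [DecidableEq X] [DecidableEq Y]
    (U : lp (fun _ : X => ℂ) 2 →L[ℂ] lp (fun _ : Y => ℂ) 2)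
    (hU : ∀ f, ‖U f‖ = ‖f‖) (δ : ℝ) (hδ : 0 < δ) :
    (∀ (x : X) (y : Y),
        δ < ‖(U ∘L ee X x ∘L adjoint U) ∘L ee Y y ∘L
              (U ∘L ContinuousLinearMap.id ℂ _ ∘L adjoint U)‖ ↔
        δ < ‖(adjoint U ∘L ee Y y ∘L U) ∘L ee X x‖) ∧
    (∀ x : X,
      Set.Finite {y : Y | δ < ‖(U ∘L ee X x ∘L adjoint U) ∘L ee Y y ∘L
          (U ∘L ContinuousLinearMap.id ℂ _ ∘L adjoint U)‖} ∧
      (Nat.card {y : Y | δ < ‖(U ∘L ee X x ∘L adjoint U) ∘L ee Y y ∘L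
          (U ∘L ContinuousLinearMap.id ℂ _ ∘L adjoint U)‖} : ℝ) ≤ δ⁻¹ ^ 2) ∧
    (∀ y : Y,
      Set.Finite {x : X | δ < ‖(adjoint U ∘L ee Y y ∘L U) ∘L ee X x‖} ∧
      (Nat.card {x : X | δ < ‖(adjoint U ∘L ee Y y ∘L U) ∘L ee X x‖} : ℝ) ≤ δ⁻¹ ^ 2) := by
  simp only [ee_eq_rankOne, norm_conj_rankOne_comp_rankOne_comp_conj_id hU,
    norm_adjoint_conj_rankOne_comp_rankOne, norm_deltaVec, mul_one]
  have hadj : ∀ y, ‖adjoint U (deltaVec Y y)‖ ≤ 1 := fun y =>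
    (norm_adjoint_apply_le_of_isometry hU _).trans (norm_deltaVec Y y).le
  have hle : ∀ x y, ‖inner ℂ (adjoint U (deltaVec Y y)) (deltaVec X x)‖ *
      ‖adjoint U (deltaVec Y y)‖ ≤ ‖inner ℂ (adjoint U (deltaVec Y y)) (deltaVec X x)‖ :=
    fun x y => mul_le_of_le_one_right (norm_nonneg _) (hadj y)
  refine ⟨fun _ _ => trivial, fun x => ?_, fun y => ?_⟩
  · exact lp.finite_and_natCard_le_of_le_norm_apply (U (deltaVec X x))
      (by rw [hU, norm_deltaVec]) hδ fun y =>
      (hle x y).trans_eq (by rw [adjoint_inner_left, inner_deltaVec_left])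
  · exact lp.finite_and_natCard_le_of_le_norm_apply (adjoint U (deltaVec Y y)) (hadj y) hδ
      fun x => (hle x y).trans_eq (by rw [norm_inner_symm, inner_deltaVec_left])
end
end

section
/- Let (X, 𝓔) be a uniformly locally finite coarse space. Every operator a in C*_u(X,𝓔) belongs to C*_u(X,𝓕) for some countably generated coarse reduct 𝓕 ⊆ 𝓔; consequently C*_u(X,𝓔) is the union of C*_u(X,𝓕) over all countably generated reducts 𝓕 of 𝓔. -/
open ContinuousLinearMap

/-- A coarse structure on `X`: a collection of subsets of `X × X` containing the diagonal
and closed under subsets, finite unions, inverses, and composition. -/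
structure CoarseStructure (X : Type*) where
  sets : Set (Set (X × X))
  diagonal_mem : {p : X × X | p.1 = p.2} ∈ sets
  subset_mem : ∀ E ∈ sets, ∀ F ⊆ E, F ∈ sets
  union_mem : ∀ E ∈ sets, ∀ F ∈ sets, E ∪ F ∈ sets
  inv_mem : ∀ E ∈ sets, {p : X × X | (p.2, p.1) ∈ E} ∈ sets
  comp_mem : ∀ E ∈ sets, ∀ F ∈ sets,
    {p : X × X | ∃ y, (p.1, y) ∈ E ∧ (y, p.2) ∈ F} ∈ sets

/-- A coarse structure is uniformly locally finite if each entourage has uniformly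
finite sections. -/
def CoarseStructure.ULF {X : Type*} (𝓔 : CoarseStructure X) : Prop :=
  ∀ E ∈ 𝓔.sets, ∃ k : ℕ, ∀ x : X,
    Set.Finite {y | (x, y) ∈ E} ∧ Nat.card {y | (x, y) ∈ E} ≤ k

noncomputable section

/-- The support of an operator `a` on `ℓ²(X)`:
`{(x, y) : ⟨a δ_x, δ_y⟩ ≠ 0}`. -/
def opSupport {X : Type*} [DecidableEq X]
    (a : lp (fun _ : X => ℂ) 2 →L[ℂ] lp (fun _ : X => ℂ) 2) : Set (X × X) :=
  {p | inner (𝕜 := ℂ) (a (deltaVec X p.1)) (deltaVec X p.2) ≠ 0}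

/-- The uniform Roe algebra of `(X, 𝓔)`: the operator-norm closure of the set of
operators with `𝓔`-bounded propagation. -/
def RoeAlgebra {X : Type*} [DecidableEq X] (𝓔 : CoarseStructure X) :
    Set (lp (fun _ : X => ℂ) 2 →L[ℂ] lp (fun _ : X => ℂ) 2) :=
  closure {a | opSupport a ∈ 𝓔.sets}

end

/-! If `b_n → a` with each `b_n` of `𝓔`-bounded propagation, the coarse structure generated by the
countably many supports `supp b_n` lies inside `𝓔` and already makes every `b_n` of bounded
propagation, so its Roe algebra contains `a`. -/

namespace CoarseStructure

variable {X : Type*}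

def generate (S : Set (Set (X × X))) : CoarseStructure X where
  sets := {E | ∀ 𝓖 : CoarseStructure X, S ⊆ 𝓖.sets → E ∈ 𝓖.sets}
  diagonal_mem := fun 𝓖 _ => 𝓖.diagonal_mem
  subset_mem := fun E hE F hF 𝓖 hS => 𝓖.subset_mem E (hE 𝓖 hS) F hF
  union_mem := fun E hE F hF 𝓖 hS => 𝓖.union_mem E (hE 𝓖 hS) F (hF 𝓖 hS)
  inv_mem := fun E hE 𝓖 hS => 𝓖.inv_mem E (hE 𝓖 hS)
  comp_mem := fun E hE F hF 𝓖 hS => 𝓖.comp_mem E (hE 𝓖 hS) F (hF 𝓖 hS)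

theorem subset_generate (S : Set (Set (X × X))) : S ⊆ (generate S).sets :=
  fun _ hE _ hS => hS hE

theorem generate_sets_subset {S : Set (Set (X × X))} {𝓖 : CoarseStructure X}
    (h : S ⊆ 𝓖.sets) : (generate S).sets ⊆ 𝓖.sets :=
  fun _ hE => hE 𝓖 h

end CoarseStructure

open CoarseStructure

theorem roeAlgebra_mono {X : Type*} [DecidableEq X] {𝓕 𝓔 : CoarseStructure X}
    (h : 𝓕.sets ⊆ 𝓔.sets) : RoeAlgebra 𝓕 ⊆ RoeAlgebra 𝓔 :=
  closure_mono fun _ hb => h hb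

theorem exists_seq_mem_roeAlgebra_generate {X : Type*} [DecidableEq X]
    {𝓔 : CoarseStructure X} {a : lp (fun _ : X => ℂ) 2 →L[ℂ] lp (fun _ : X => ℂ) 2}
    (ha : a ∈ RoeAlgebra 𝓔) :
    ∃ F : ℕ → Set (X × X), (∀ n, F n ∈ 𝓔.sets) ∧ a ∈ RoeAlgebra (generate (Set.range F)) := by
  obtain ⟨b, hb, hlim⟩ := mem_closure_iff_seq_limit.mp ha
  refine ⟨fun n => opSupport (b n), hb, mem_closure_iff_seq_limit.mpr ⟨b, fun n => ?_, hlim⟩⟩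
  exact subset_generate _ ⟨n, rfl⟩

theorem roe_mem_iff_mem_countably_generated_reduct_general {X : Type*} [DecidableEq X]
    (𝓔 : CoarseStructure X)
    (a : lp (fun _ : X => ℂ) 2 →L[ℂ] lp (fun _ : X => ℂ) 2) :
    a ∈ RoeAlgebra 𝓔 ↔ ∃ 𝓕 : CoarseStructure X, 𝓕.sets ⊆ 𝓔.sets ∧
      (∃ F : ℕ → Set (X × X), (∀ n, F n ∈ 𝓕.sets) ∧
        ∀ 𝓖 : CoarseStructure X, (∀ n, F n ∈ 𝓖.sets) → 𝓕.sets ⊆ 𝓖.sets) ∧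
      a ∈ RoeAlgebra 𝓕 := by
  constructor
  · intro ha
    obtain ⟨F, hF𝓔, haF⟩ := exists_seq_mem_roeAlgebra_generate ha
    exact ⟨generate (Set.range F), generate_sets_subset (Set.range_subset_iff.mpr hF𝓔),
      ⟨F, fun n => subset_generate _ ⟨n, rfl⟩,
        fun _ h => generate_sets_subset (Set.range_subset_iff.mpr h)⟩, haF⟩
  · rintro ⟨𝓕, h𝓕𝓔, -, ha⟩
    exact roeAlgebra_mono h𝓕𝓔 ha

/-- For a u.l.f. coarse space `(X, 𝓔)`, an operator belongs to `C*_u(X, 𝓔)` if and only if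
it belongs to `C*_u(X, 𝓕)` for some countably generated coarse reduct `𝓕 ⊆ 𝓔`; thus
`C*_u(X, 𝓔)` is the union of the `C*_u(X, 𝓕)` over countably generated reducts `𝓕`. -/
theorem roe_mem_iff_mem_countably_generated_reduct {X : Type*} [DecidableEq X]
    (𝓔 : CoarseStructure X) (hulf : 𝓔.ULF)
    (a : lp (fun _ : X => ℂ) 2 →L[ℂ] lp (fun _ : X => ℂ) 2) :
    a ∈ RoeAlgebra 𝓔 ↔ ∃ 𝓕 : CoarseStructure X, 𝓕.sets ⊆ 𝓔.sets ∧
      (∃ F : ℕ → Set (X × X), (∀ n, F n ∈ 𝓕.sets) ∧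
        ∀ 𝓖 : CoarseStructure X, (∀ n, F n ∈ 𝓖.sets) → 𝓕.sets ⊆ 𝓖.sets) ∧
      a ∈ RoeAlgebra 𝓕 :=
  roe_mem_iff_mem_countably_generated_reduct_general 𝓔 a
end

section
/- Let (X, 𝓔) be a uniformly locally finite coarse space. For every E ∈ 𝓔 there is a finite partition E = E₁ ⊔ … ⊔ Eₙ such that each Eᵢ is the graph of a partial bijection (i.e., both coordinate projections restricted to Eᵢ are injective). -/
open ContinuousLinearMap

/-!
Bound the rows of `E` by `k` and its columns by `k'` (the columns of `E` are the rows of its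
inverse, again an entourage), and number the points of each row by `Fin k` and of each column
by `Fin k'`. Colour `(x, y) ∈ E` by the pair (number of `y` in row `x`, number of `x` in
column `y`): two distinct points of the same colour share neither a row nor a column, so each
of the `k * k'` colour classes is the graph of a partial bijection.
-/

section

variable {α β γ ι κ : Type*}

theorem Finite.nonempty_embedding_of_card_le [Finite α] [Finite β]
    (h : Nat.card α ≤ Nat.card β) : Nonempty (α ↪ β) := by
  have := Fintype.ofFinite α
  have := Fintype.ofFinite β
  exact Function.Embedding.nonempty_of_card_le (by simpa only [Nat.card_eq_fintype_card] using h)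

theorem CoarseStructure.ULF.exists_row_embedding {X : Type*} {𝓔 : CoarseStructure X}
    (hulf : 𝓔.ULF) {E : Set (X × X)} (hE : E ∈ 𝓔.sets) :
    ∃ k, ∀ x, Nonempty ({y | (x, y) ∈ E} ↪ Fin k) := by
  obtain ⟨k, hk⟩ := hulf E hE
  refine ⟨k, fun x => ?_⟩
  have := (hk x).1.to_subtype
  exact Finite.nonempty_embedding_of_card_le ((hk x).2.trans (Nat.card_fin k).ge)

theorem CoarseStructure.ULF.exists_column_embedding {X : Type*} {𝓔 : CoarseStructure X}
    (hulf : 𝓔.ULF) {E : Set (X × X)} (hE : E ∈ 𝓔.sets) :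
    ∃ k, ∀ y, Nonempty ({x | (x, y) ∈ E} ↪ Fin k) :=
  hulf.exists_row_embedding (𝓔.inv_mem E hE)

def rowColumnColoring {E : Set (α × β)} (f : ∀ a, {b | (a, b) ∈ E} ↪ ι)
    (g : ∀ b, {a | (a, b) ∈ E} ↪ κ) (p : E) : ι × κ :=
  (f p.1.1 ⟨p.1.2, p.2⟩, g p.1.2 ⟨p.1.1, p.2⟩)

section rowColumnColoring

variable {E : Set (α × β)} (f : ∀ a, {b | (a, b) ∈ E} ↪ ι) (g : ∀ b, {a | (a, b) ∈ E} ↪ κ)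

theorem eq_of_rowColumnColoring_eq_of_fst_eq {p q : E}
    (h : rowColumnColoring f g p = rowColumnColoring f g q) (h₁ : p.1.1 = q.1.1) : p = q := by
  obtain ⟨⟨a, b⟩, hp⟩ := p
  obtain ⟨⟨a', b'⟩, hq⟩ := q
  obtain rfl : a = a' := h₁
  obtain rfl : b = b' := congrArg Subtype.val ((f a).injective (congrArg Prod.fst h))
  rfl

theorem eq_of_rowColumnColoring_eq_of_snd_eq {p q : E}
    (h : rowColumnColoring f g p = rowColumnColoring f g q) (h₂ : p.1.2 = q.1.2) : p = q := by
  obtain ⟨⟨a, b⟩, hp⟩ := p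
  obtain ⟨⟨a', b'⟩, hq⟩ := q
  obtain rfl : b = b' := h₂
  obtain rfl : a = a' := congrArg Subtype.val ((g b).injective (congrArg Prod.snd h))
  rfl

end rowColumnColoring

theorem exists_fin_partition_of_coloring {E : Set (α × β)} [Finite γ] (c : E → γ)
    (hrow : ∀ p q, c p = c q → p.1.1 = q.1.1 → p = q)
    (hcol : ∀ p q, c p = c q → p.1.2 = q.1.2 → p = q) :
    ∃ (n : ℕ) (Es : Fin n → Set (α × β)),
      (∀ i j, i ≠ j → Disjoint (Es i) (Es j)) ∧
      (⋃ i, Es i) = E ∧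
      ∀ i, (∀ x y y', (x, y) ∈ Es i → (x, y') ∈ Es i → y = y') ∧
           (∀ x x' y, (x, y) ∈ Es i → (x', y) ∈ Es i → x = x') := by
  obtain ⟨n, ⟨e⟩⟩ := Finite.exists_equiv_fin γ
  refine ⟨n, fun i => Subtype.val '' (c ⁻¹' {e.symm i}), fun i j hij => ?_, ?_,
    fun i => ⟨?_, ?_⟩⟩
  · rw [Set.disjoint_image_iff Subtype.val_injective]
    exact pairwise_disjoint_fiber c (e.symm.injective.ne hij)
  · rw [← Set.image_iUnion, ← Set.preimage_iUnion, Set.iUnion_singleton_eq_range,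
      Equiv.range_eq_univ, Set.preimage_univ, Set.image_univ, Subtype.range_coe]
  · rintro x y y' ⟨p, hp, hpxy⟩ ⟨q, hq, hqxy⟩
    have h := congrArg Subtype.val (hrow p q (hp.trans hq.symm) (by rw [hpxy, hqxy]))
    rw [hpxy, hqxy] at h
    exact congrArg Prod.snd h
  · rintro x x' y ⟨p, hp, hpxy⟩ ⟨q, hq, hqxy⟩
    have h := congrArg Subtype.val (hcol p q (hp.trans hq.symm) (by rw [hpxy, hqxy]))
    rw [hpxy, hqxy] at h
    exact congrArg Prod.fst h

end

/-- In a u.l.f. coarse space, every entourage admits a finite partition into graphs of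
partial bijections. -/
theorem entourage_partition_partial_bijections {X : Type*}
    (𝓔 : CoarseStructure X) (hulf : 𝓔.ULF) (E : Set (X × X)) (hE : E ∈ 𝓔.sets) :
    ∃ (n : ℕ) (Es : Fin n → Set (X × X)),
      (∀ i j, i ≠ j → Disjoint (Es i) (Es j)) ∧
      (⋃ i, Es i) = E ∧
      ∀ i, (∀ x y y', (x, y) ∈ Es i → (x, y') ∈ Es i → y = y') ∧
           (∀ x x' y, (x, y) ∈ Es i → (x', y) ∈ Es i → x = x') := by
  obtain ⟨k, hrow⟩ := hulf.exists_row_embedding hE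
  obtain ⟨k', hcol⟩ := hulf.exists_column_embedding hE
  let c := rowColumnColoring (fun x => (hrow x).some) (fun y => (hcol y).some)
  exact exists_fin_partition_of_coloring c
    (fun _ _ => eq_of_rowColumnColoring_eq_of_fst_eq _ _)
    (fun _ _ => eq_of_rowColumnColoring_eq_of_snd_eq _ _)
end
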